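/- Let S = {|α_i⟩⊗|β_i⟩} be a UPB in H_A ⊗ H_B, H the witness of Theorem (H = Σ_i |α_i⟩⟨α_i|⊗|β_i⟩⟨β_i| − dε|Ψ⟩⟨Ψ| with ⟨Ψ|ρ|Ψ⟩ > 0), and define S : B(H_A) → B(H_B) by S(|i⟩⟨j|) = ⟨i|H|j⟩ (the (i,j) block of H). Then the positive linear map S is not completely positive and is indecomposable: S cannot be written as S₁ + S₂ ∘ T with S₁, S₂ completely positive. -/

import Mathlib

open scoped BigOperators ComplexConjugate ComplexOrder

noncomputable section

def inC {ι : Type*} [Fintype ι] (x y : ι → ℂ) : ℂ := ∑ i, conj (x i) * y i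

def prodVec {ι κ : Type*} (a : ι → ℂ) (b : κ → ℂ) : ι × κ → ℂ := fun p => a p.1 * b p.2

def outer {ι : Type*} (x : ι → ℂ) : Matrix ι ι ℂ := Matrix.vecMulVec x (star x)

def ONFam {σ ι : Type*} [DecidableEq σ] [Fintype ι] (f : σ → ι → ℂ) : Prop :=
  ∀ i j, inC (f i) (f j) = if i = j then 1 else 0

def IsUPB {σ ιA ιB : Type*} [DecidableEq σ] [Fintype σ] [Fintype ιA] [Fintype ιB]
    (α : σ → ιA → ℂ) (β : σ → ιB → ℂ) : Prop :=
  ONFam (fun i => prodVec (α i) (β i)) ∧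
  Submodule.span ℂ (Set.range fun i => prodVec (α i) (β i)) ≠ ⊤ ∧
  ∀ (a : ιA → ℂ) (b : ιB → ℂ), a ≠ 0 → b ≠ 0 →
    (∀ i, inC (prodVec (α i) (β i)) (prodVec a b) = 0) → False

def MaxEnt {m n : ℕ} (Ψ : Fin m × Fin n → ℂ) : Prop :=
  ∃ (a : Fin (min m n) → Fin m → ℂ) (b : Fin (min m n) → Fin n → ℂ),
    ONFam a ∧ ONFam b ∧
    Ψ = fun p => ((Real.sqrt (min m n) : ℝ) : ℂ)⁻¹ * (∑ i, prodVec (a i) (b i)) p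

def blockMap {ι κ κ' : Type*}
    (S : Matrix κ κ ℂ →ₗ[ℂ] Matrix κ' κ' ℂ)
    (ρ : Matrix (ι × κ) (ι × κ) ℂ) : Matrix (ι × κ') (ι × κ') ℂ :=
  Matrix.of fun p q => S (Matrix.of fun b b' => ρ (p.1, b) (q.1, b')) p.2 q.2

def IsCP {κ κ' : Type*} [Fintype κ] [Fintype κ'] [DecidableEq κ] [DecidableEq κ']
    (S : Matrix κ κ ℂ →ₗ[ℂ] Matrix κ' κ' ℂ) : Prop :=
  ∀ (k : ℕ) (ρ : Matrix (Fin k × κ) (Fin k × κ) ℂ),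
    ρ.PosSemidef → (blockMap S ρ).PosSemidef

def Tmap (κ : Type*) : Matrix κ κ ℂ →ₗ[ℂ] Matrix κ κ ℂ where
  toFun := Matrix.transpose
  map_add' := Matrix.transpose_add
  map_smul' := Matrix.transpose_smul

/-!
Positivity: `⟨c|S(w wᴴ)|c⟩ = ⟨w̄ ⊗ c|H|w̄ ⊗ c⟩`, and on a product vector
`⟨a ⊗ c|H|a ⊗ c⟩ = Σᵢ |⟨αᵢ|a⟩|² |⟨βᵢ|c⟩|² − dε |⟨Ψ|a ⊗ c⟩|²`. The sum is at least `ε ‖a‖² ‖c‖²`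
by the choice of `ε`, while `d |⟨Ψ|a ⊗ c⟩|² ≤ ‖a‖² ‖c‖²` for maximally entangled `Ψ`
(Cauchy–Schwarz and Bessel for its Schmidt vectors).

Indecomposability: the UPB state `ρ` is positive and so is its partial transpose, the
complementary projector of the orthonormal family `αᵢ ⊗ β̄ᵢ`. Hence for `S = S₁ + S₂ ∘ T` with
`S₁, S₂` completely positive, `(id ⊗ S)` maps a reindexed transpose of `ρ` to a positive matrix,
whose expectation in `Σ_b |b b⟩` is `Tr(ρ H)`. Since `ρ` kills every `αᵢ ⊗ βᵢ`,
`Tr(ρ H) = −dε ⟨Ψ|ρ|Ψ⟩ < 0`. Taking `S₂ = 0` shows that `S` is not completely positive.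
-/

open Matrix

section InnerProduct

variable {ι κ : Type*} [Fintype ι] [Fintype κ]

lemma inC_eq_dotProduct (x y : ι → ℂ) : inC x y = star x ⬝ᵥ y := rfl

lemma conj_inC (x y : ι → ℂ) : conj (inC x y) = inC y x := by
  simp [inC, map_sum, mul_comm]

lemma norm_inC_comm (x y : ι → ℂ) : ‖inC x y‖ = ‖inC y x‖ := by
  rw [← conj_inC, RCLike.norm_conj]

lemma inC_self (x : ι → ℂ) : inC x x = ((∑ i, ‖x i‖ ^ 2 : ℝ) : ℂ) := by
  simp [inC, Complex.conj_mul']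

lemma inC_prodVec (a c : ι → ℂ) (b d : κ → ℂ) :
    inC (prodVec a b) (prodVec c d) = inC a c * inC b d := by
  simp only [inC, prodVec, Fintype.sum_prod_type, Finset.sum_mul_sum, map_mul]
  exact Finset.sum_congr rfl fun _ _ => Finset.sum_congr rfl fun _ _ => by ring

lemma inC_smul_left (z : ℂ) (x y : ι → ℂ) : inC (z • x) y = conj z * inC x y := by
  simp [inC_eq_dotProduct, star_smul]

lemma inC_sum_left {σ : Type*} [Fintype σ] (f : σ → ι → ℂ) (y : ι → ℂ) :
    inC (∑ i, f i) y = ∑ i, inC (f i) y := by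
  simp [inC_eq_dotProduct, star_sum, sum_dotProduct]

lemma exists_inC_self_eq_one {x : ι → ℂ} (hx : 0 < ∑ i, ‖x i‖ ^ 2) :
    ∃ x' : ι → ℂ, inC x' x' = 1 ∧
      ∀ y : ι → ℂ, ‖inC x' y‖ ^ 2 = ‖inC x y‖ ^ 2 / ∑ i, ‖x i‖ ^ 2 := by
  set N := ∑ i, ‖x i‖ ^ 2
  have hN : ((Real.sqrt N)⁻¹) ^ 2 = N⁻¹ := by rw [inv_pow, Real.sq_sqrt hx.le]
  refine ⟨(((Real.sqrt N)⁻¹ : ℝ) : ℂ) • x, ?_, fun y => ?_⟩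
  · rw [inC_self, Complex.ofReal_eq_one]
    simp only [Pi.smul_apply, smul_eq_mul, norm_mul, mul_pow, Complex.norm_real,
      Real.norm_eq_abs, sq_abs, ← Finset.mul_sum, hN]
    exact inv_mul_cancel₀ hx.ne'
  · rw [inC_smul_left, norm_mul, RCLike.norm_conj, mul_pow, Complex.norm_real,
      Real.norm_eq_abs, sq_abs, hN, inv_mul_eq_div]

lemma outer_mulVec (x y : ι → ℂ) : outer y *ᵥ x = inC y x • y := by
  rw [outer, vecMulVec_mulVec, op_smul_eq_smul]
  rfl

lemma star_dotProduct_outer_mulVec (x y : ι → ℂ) :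
    star x ⬝ᵥ outer y *ᵥ x = (‖inC y x‖ : ℂ) ^ 2 := by
  rw [outer_mulVec, dotProduct_smul, ← inC_eq_dotProduct, smul_eq_mul, ← conj_inC x y,
    Complex.conj_mul', RCLike.norm_conj]

lemma isHermitian_outer (y : ι → ℂ) : (outer y).IsHermitian :=
  (posSemidef_vecMulVec_self_star y).isHermitian

lemma trace_mul_outer (A : Matrix ι ι ℂ) (y : ι → ℂ) :
    trace (A * outer y) = inC y (A *ᵥ y) := by
  rw [outer, mul_vecMulVec, trace_vecMulVec, dotProduct_comm]
  rfl

end InnerProduct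

lemma posSemidef_one_sub_of_isHermitian_of_mul_self {ι : Type*} [Fintype ι] [DecidableEq ι]
    {P : Matrix ι ι ℂ} (hP : P.IsHermitian) (hPP : P * P = P) : (1 - P).PosSemidef := by
  have hproj : (1 - P)ᴴ * (1 - P) = 1 - P := by
    rw [(isHermitian_one.sub hP).eq]
    simp only [sub_mul, mul_sub, one_mul, mul_one, hPP]
    abel
  rw [← hproj]
  exact posSemidef_conjTranspose_mul_self _

section Orthonormal

variable {σ ι κ : Type*} [DecidableEq σ] [Fintype ι] [Fintype κ]

namespace ONFam

lemma prodVec_star_right {α : σ → ι → ℂ} {β : σ → κ → ℂ}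
    (h : ONFam fun i => prodVec (α i) (β i)) :
    ONFam fun i => prodVec (α i) (star (β i)) := by
  intro i j
  have hij := h i j
  have hstar : inC (star (β i)) (star (β j)) = inC (β j) (β i) := by
    simp [inC, mul_comm]
  rw [inC_prodVec] at hij ⊢
  rw [hstar]
  split_ifs at hij ⊢ with hij'
  · subst hij'
    exact hij
  · rcases mul_eq_zero.mp hij with h0 | h0
    · rw [h0, zero_mul]
    · rw [← conj_inC (β i) (β j), h0, map_zero, mul_zero]

variable [Fintype σ] {g : σ → ι → ℂ}

lemma sum_outer_mulVec (hg : ONFam g) (t : σ) : (∑ i, outer (g i)) *ᵥ g t = g t := by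
  simp [sum_mulVec, outer_mulVec, hg _ t]

lemma one_sub_sum_outer_mulVec [DecidableEq ι] (hg : ONFam g) (t : σ) :
    (1 - ∑ i, outer (g i)) *ᵥ g t = 0 := by
  rw [sub_mulVec, one_mulVec, hg.sum_outer_mulVec, sub_self]

lemma posSemidef_one_sub_sum_outer [DecidableEq ι] (hg : ONFam g) :
    (1 - ∑ i, outer (g i)).PosSemidef := by
  refine posSemidef_one_sub_of_isHermitian_of_mul_self
    (isSelfAdjoint_sum _ fun i _ => isHermitian_outer (g i)) ?_
  rw [Finset.mul_sum]
  refine Finset.sum_congr rfl fun t _ => ?_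
  rw [outer, mul_vecMulVec, hg.sum_outer_mulVec]

lemma sum_norm_inC_sq_le [DecidableEq ι] (hg : ONFam g) (x : ι → ℂ) :
    ∑ i, ‖inC (g i) x‖ ^ 2 ≤ ∑ j, ‖x j‖ ^ 2 := by
  have h := hg.posSemidef_one_sub_sum_outer.dotProduct_mulVec_nonneg x
  rw [sub_mulVec, one_mulVec, dotProduct_sub, sum_mulVec, dotProduct_sum] at h
  simp only [star_dotProduct_outer_mulVec] at h
  rw [← inC_eq_dotProduct, inC_self] at h
  exact_mod_cast sub_nonneg.mp h

end ONFam

end Orthonormal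

section PartialTranspose

variable {ι κ κ' : Type*}

def partialTranspose : Matrix (ι × κ) (ι × κ) ℂ →ₗ[ℂ] Matrix (ι × κ) (ι × κ) ℂ where
  toFun ρ := Matrix.of fun p q => ρ (p.1, q.2) (q.1, p.2)
  map_add' _ _ := rfl
  map_smul' _ _ := rfl

lemma partialTranspose_apply (ρ : Matrix (ι × κ) (ι × κ) ℂ) (p q : ι × κ) :
    partialTranspose ρ p q = ρ (p.1, q.2) (q.1, p.2) := rfl

lemma partialTranspose_one [DecidableEq ι] [DecidableEq κ] :
    partialTranspose (1 : Matrix (ι × κ) (ι × κ) ℂ) = 1 := by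
  ext ⟨a, b⟩ ⟨a', b'⟩
  simp only [partialTranspose_apply, one_apply, Prod.mk.injEq, eq_comm (a := b')]

lemma partialTranspose_outer_prodVec (a : ι → ℂ) (b : κ → ℂ) :
    partialTranspose (outer (prodVec a b)) = outer (prodVec a (star b)) := by
  ext p q
  simp only [partialTranspose_apply, outer, vecMulVec_apply, prodVec, Pi.star_apply, star_mul',
    star_star]
  ring

lemma ONFam.posSemidef_partialTranspose_one_sub_sum_outer {σ : Type*} [Fintype σ]
    [DecidableEq σ] [Fintype ι] [DecidableEq ι] [Fintype κ] [DecidableEq κ]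
    {α : σ → ι → ℂ} {β : σ → κ → ℂ} (h : ONFam fun i => prodVec (α i) (β i)) :
    (partialTranspose (1 - ∑ i, outer (prodVec (α i) (β i)))).PosSemidef := by
  rw [map_sub, map_sum, partialTranspose_one]
  simp only [partialTranspose_outer_prodVec]
  exact h.prodVec_star_right.posSemidef_one_sub_sum_outer

lemma blockMap_add (S₁ S₂ : Matrix κ κ ℂ →ₗ[ℂ] Matrix κ' κ' ℂ) (ρ : Matrix (ι × κ) (ι × κ) ℂ) :
    blockMap (S₁ + S₂) ρ = blockMap S₁ ρ + blockMap S₂ ρ := rfl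

lemma blockMap_comp_Tmap (S : Matrix κ κ ℂ →ₗ[ℂ] Matrix κ' κ' ℂ)
    (ρ : Matrix (ι × κ) (ι × κ) ℂ) :
    blockMap (S ∘ₗ Tmap κ) ρ = blockMap S (partialTranspose ρ) := rfl

variable [Fintype κ] [Fintype κ'] [DecidableEq κ] [DecidableEq κ']

lemma isCP_zero : IsCP (0 : Matrix κ κ ℂ →ₗ[ℂ] Matrix κ' κ' ℂ) :=
  fun _ _ _ => PosSemidef.zero

lemma IsCP.posSemidef_blockMap_add_comp_Tmap {S₁ S₂ : Matrix κ κ ℂ →ₗ[ℂ] Matrix κ' κ' ℂ}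
    (h₁ : IsCP S₁) (h₂ : IsCP S₂) {k : ℕ} {ρ : Matrix (Fin k × κ) (Fin k × κ) ℂ}
    (hρ : ρ.PosSemidef) (hρΓ : (partialTranspose ρ).PosSemidef) :
    (blockMap (S₁ + S₂ ∘ₗ Tmap κ) ρ).PosSemidef := by
  rw [blockMap_add, blockMap_comp_Tmap]
  exact (h₁ k ρ hρ).add (h₂ k _ hρΓ)

end PartialTranspose

section ChoiBlocks

variable {ι κ : Type*} [Fintype ι] [DecidableEq ι]
  {H : Matrix (ι × κ) (ι × κ) ℂ} {S : Matrix ι ι ℂ →ₗ[ℂ] Matrix κ κ ℂ}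

lemma apply_eq_sum_of_single
    (hS : ∀ i j, S (single i j 1) = of fun b b' => H (i, b) (j, b')) (M : Matrix ι ι ℂ) :
    S M = of fun b b' => ∑ i, ∑ j, M i j * H (i, b) (j, b') := by
  conv_lhs => rw [matrix_eq_sum_single M]
  ext b b'
  simp only [map_sum, Matrix.sum_apply, of_apply]
  refine Finset.sum_congr rfl fun i _ => Finset.sum_congr rfl fun j _ => ?_
  have hsingle : single i j (M i j) = M i j • single i j 1 := by
    rw [smul_single, smul_eq_mul, mul_one]
  rw [hsingle, map_smul, hS]
  rfl

lemma isHermitian_apply_of_single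
    (hS : ∀ i j, S (single i j 1) = of fun b b' => H (i, b) (j, b'))
    (hH : H.IsHermitian) {M : Matrix ι ι ℂ} (hM : M.IsHermitian) : (S M).IsHermitian := by
  ext b b'
  rw [conjTranspose_apply, apply_eq_sum_of_single hS, of_apply, of_apply, star_sum,
    Finset.sum_comm]
  refine Finset.sum_congr rfl fun i _ => ?_
  rw [star_sum]
  refine Finset.sum_congr rfl fun j _ => ?_
  rw [star_mul', ← conjTranspose_apply, hM.eq, ← conjTranspose_apply H, hH.eq]

variable [Fintype κ]

lemma star_dotProduct_apply_outer_mulVec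
    (hS : ∀ i j, S (single i j 1) = of fun b b' => H (i, b) (j, b')) (w : ι → ℂ) (c : κ → ℂ) :
    star c ⬝ᵥ S (outer w) *ᵥ c = star (prodVec (star w) c) ⬝ᵥ H *ᵥ prodVec (star w) c := by
  rw [apply_eq_sum_of_single hS]
  simp only [dotProduct, mulVec, of_apply, Fintype.sum_prod_type, outer, vecMulVec_apply,
    prodVec, Pi.star_apply, star_star, star_mul', Finset.mul_sum, Finset.sum_mul]
  refine (Finset.sum_congr rfl fun b _ => ?_).trans Finset.sum_comm
  rw [Finset.sum_comm]
  refine Finset.sum_congr rfl fun i _ => ?_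
  rw [Finset.sum_comm]
  refine Finset.sum_congr rfl fun j _ => Finset.sum_congr rfl fun b' _ => ?_
  ring

lemma posSemidef_apply_of_single
    (hS : ∀ i j, S (single i j 1) = of fun b b' => H (i, b) (j, b')) (hH : H.IsHermitian)
    (hblock : ∀ a c, 0 ≤ star (prodVec a c) ⬝ᵥ H *ᵥ prodVec a c)
    {M : Matrix ι ι ℂ} (hM : M.PosSemidef) : (S M).PosSemidef := by
  refine .of_dotProduct_mulVec_nonneg (isHermitian_apply_of_single hS hH hM.1) fun c => ?_
  obtain ⟨r, v, rfl⟩ := posSemidef_iff_eq_sum_vecMulVec.mp hM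
  rw [map_sum, sum_mulVec, dotProduct_sum]
  exact Finset.sum_nonneg fun k _ => star_dotProduct_apply_outer_mulVec hS (v k) c ▸ hblock _ _

-- `vec 1` is the unnormalised maximally entangled vector `Σ_b |b b⟩`.
lemma star_vec_one_dotProduct_mulVec [DecidableEq κ] (A : Matrix (κ × κ) (κ × κ) ℂ) :
    star (vec (1 : Matrix κ κ ℂ)) ⬝ᵥ A *ᵥ vec 1 = ∑ b, ∑ b', A (b, b) (b', b') := by
  simp [dotProduct, mulVec, Fintype.sum_prod_type, one_apply]

lemma star_vec_one_dotProduct_blockMap_mulVec [DecidableEq κ]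
    (hS : ∀ i j, S (single i j 1) = of fun b b' => H (i, b) (j, b'))
    (ρ : Matrix (ι × κ) (ι × κ) ℂ) :
    star (vec (1 : Matrix κ κ ℂ)) ⬝ᵥ blockMap S (ρ.submatrix Prod.swap Prod.swap)ᵀ *ᵥ vec 1
      = trace (ρ * H) := by
  rw [star_vec_one_dotProduct_mulVec, trace_mul_comm]
  simp only [blockMap, of_apply, apply_eq_sum_of_single hS, transpose_apply, submatrix_apply,
    Prod.swap, trace, diag, mul_apply, Fintype.sum_prod_type]
  rw [Finset.sum_congr rfl fun b _ => Finset.sum_comm, Finset.sum_comm]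
  refine Finset.sum_congr rfl fun i _ => Finset.sum_congr rfl fun b _ => ?_
  rw [Finset.sum_comm]
  exact Finset.sum_congr rfl fun j _ => Finset.sum_congr rfl fun b' _ => mul_comm _ _

end ChoiBlocks

lemma trace_mul_nonneg_of_decomposable {ι : Type*} [Fintype ι] [DecidableEq ι] {k : ℕ}
    {S₁ S₂ : Matrix ι ι ℂ →ₗ[ℂ] Matrix (Fin k) (Fin k) ℂ} (h₁ : IsCP S₁) (h₂ : IsCP S₂)
    {H : Matrix (ι × Fin k) (ι × Fin k) ℂ}
    (hS : ∀ i j, (S₁ + S₂ ∘ₗ Tmap ι) (single i j 1) = of fun b b' => H (i, b) (j, b'))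
    {ρ : Matrix (ι × Fin k) (ι × Fin k) ℂ}
    (hρ : ρ.PosSemidef) (hρΓ : (partialTranspose ρ).PosSemidef) : 0 ≤ trace (ρ * H) := by
  rw [← star_vec_one_dotProduct_blockMap_mulVec hS]
  exact (h₁.posSemidef_blockMap_add_comp_Tmap h₂ (hρ.submatrix Prod.swap).transpose
    (hρΓ.submatrix Prod.swap)).dotProduct_mulVec_nonneg _

section Witness

variable {σ ι κ : Type*} [Fintype σ] [Fintype ι] [Fintype κ]

lemma mul_le_sum_of_forall_inC_self_eq_one {f : σ → ι → ℂ} {g : σ → κ → ℂ} {ε : ℝ}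
    (h : ∀ a b, inC a a = 1 → inC b b = 1 → ε ≤ ∑ i, ‖inC a (f i)‖ ^ 2 * ‖inC b (g i)‖ ^ 2)
    (a : ι → ℂ) (b : κ → ℂ) :
    ε * ((∑ j, ‖a j‖ ^ 2) * ∑ k, ‖b k‖ ^ 2) ≤ ∑ i, ‖inC a (f i)‖ ^ 2 * ‖inC b (g i)‖ ^ 2 := by
  have hsum : 0 ≤ ∑ i, ‖inC a (f i)‖ ^ 2 * ‖inC b (g i)‖ ^ 2 := by positivity
  rcases (show 0 ≤ ∑ j, ‖a j‖ ^ 2 by positivity).eq_or_lt with ha | ha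
  · rwa [← ha, zero_mul, mul_zero]
  rcases (show 0 ≤ ∑ k, ‖b k‖ ^ 2 by positivity).eq_or_lt with hb | hb
  · rwa [← hb, mul_zero, mul_zero]
  obtain ⟨a', ha'1, ha'⟩ := exists_inC_self_eq_one ha
  obtain ⟨b', hb'1, hb'⟩ := exists_inC_self_eq_one hb
  rw [← le_div_iff₀ (mul_pos ha hb), Finset.sum_div]
  refine (h a' b' ha'1 hb'1).trans_eq (Finset.sum_congr rfl fun i _ => ?_)
  rw [ha', hb', div_mul_div_comm]

lemma star_dotProduct_sum_outer_sub_smul_outer_mulVec (g : σ → ι → ℂ) (r : ℝ)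
    (Ψ y : ι → ℂ) :
    star y ⬝ᵥ (∑ i, outer (g i) - (r : ℂ) • outer Ψ) *ᵥ y
      = ((∑ i, ‖inC (g i) y‖ ^ 2 - r * ‖inC Ψ y‖ ^ 2 : ℝ) : ℂ) := by
  simp only [sub_mulVec, sum_mulVec, dotProduct_sub, dotProduct_sum, smul_mulVec,
    dotProduct_smul, star_dotProduct_outer_mulVec, smul_eq_mul]
  push_cast
  rfl

lemma isHermitian_sum_outer_sub_smul_outer (g : σ → ι → ℂ) (r : ℝ) (Ψ : ι → ℂ) :
    (∑ i, outer (g i) - (r : ℂ) • outer Ψ).IsHermitian :=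
  (isSelfAdjoint_sum _ fun i _ => isHermitian_outer (g i)).sub
    ((isHermitian_outer Ψ).smul (Complex.conj_ofReal r))

lemma trace_mul_sum_outer_sub_smul_outer {ρ : Matrix ι ι ℂ} {g : σ → ι → ℂ}
    (hρ : ∀ i, ρ *ᵥ g i = 0) (r : ℂ) (Ψ : ι → ℂ) :
    trace (ρ * (∑ i, outer (g i) - r • outer Ψ)) = -(r * inC Ψ (ρ *ᵥ Ψ)) := by
  simp [mul_sub, Finset.mul_sum, trace_sum, trace_mul_outer, hρ, inC_eq_dotProduct]

end Witness

lemma MaxEnt.mul_norm_inC_prodVec_sq_le {m n : ℕ} {Ψ : Fin m × Fin n → ℂ} (hΨ : MaxEnt Ψ)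
    (a : Fin m → ℂ) (c : Fin n → ℂ) :
    (min m n : ℝ) * ‖inC Ψ (prodVec a c)‖ ^ 2 ≤ (∑ i, ‖a i‖ ^ 2) * ∑ j, ‖c j‖ ^ 2 := by
  obtain ⟨u, v, hu, hv, rfl⟩ := hΨ
  set d : ℝ := min m n
  have hinC : inC (fun p => ((√d : ℝ) : ℂ)⁻¹ * (∑ i, prodVec (u i) (v i)) p) (prodVec a c)
      = conj ((√d : ℝ) : ℂ)⁻¹ * ∑ i, inC (u i) a * inC (v i) c := by
    rw [show (fun p => ((√d : ℝ) : ℂ)⁻¹ * (∑ i, prodVec (u i) (v i)) p)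
      = ((√d : ℝ) : ℂ)⁻¹ • ∑ i, prodVec (u i) (v i) from rfl, inC_smul_left, inC_sum_left]
    simp only [inC_prodVec]
  have hd : d * ‖conj ((√d : ℝ) : ℂ)⁻¹‖ ^ 2 ≤ 1 := by
    rw [RCLike.norm_conj, norm_inv, Complex.norm_real, Real.norm_eq_abs, inv_pow, sq_abs,
      Real.sq_sqrt (by positivity)]
    exact mul_inv_le_one
  have hcs : ‖∑ i, inC (u i) a * inC (v i) c‖ ^ 2
      ≤ (∑ i, ‖inC (u i) a‖ ^ 2) * ∑ i, ‖inC (v i) c‖ ^ 2 := by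
    refine le_trans (pow_le_pow_left₀ (norm_nonneg _) ?_ 2) (Finset.sum_mul_sq_le_sq_mul_sq _ _ _)
    exact (norm_sum_le _ _).trans_eq (by simp only [norm_mul])
  calc d * ‖inC _ (prodVec a c)‖ ^ 2
      = (d * ‖conj ((√d : ℝ) : ℂ)⁻¹‖ ^ 2) * ‖∑ i, inC (u i) a * inC (v i) c‖ ^ 2 := by
        rw [hinC, norm_mul, mul_pow, mul_assoc]
    _ ≤ 1 * ((∑ i, ‖inC (u i) a‖ ^ 2) * ∑ i, ‖inC (v i) c‖ ^ 2) :=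
        mul_le_mul hd hcs (sq_nonneg _) zero_le_one
    _ ≤ (∑ i, ‖a i‖ ^ 2) * ∑ j, ‖c j‖ ^ 2 := by
        rw [one_mul]
        exact mul_le_mul (hu.sum_norm_inC_sq_le a) (hv.sum_norm_inC_sq_le c) (by positivity)
          (by positivity)

lemma star_prodVec_dotProduct_upbWitness_mulVec_nonneg {m n s : ℕ}
    {α : Fin s → Fin m → ℂ} {β : Fin s → Fin n → ℂ} {ε : ℝ} (hε : 0 ≤ ε)
    (hεmin : ∀ (a : Fin m → ℂ) (b : Fin n → ℂ), inC a a = 1 → inC b b = 1 →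
      ε ≤ ∑ i, ‖inC a (α i)‖ ^ 2 * ‖inC b (β i)‖ ^ 2)
    {Ψ : Fin m × Fin n → ℂ} (hΨ : MaxEnt Ψ) (a : Fin m → ℂ) (c : Fin n → ℂ) :
    0 ≤ star (prodVec a c) ⬝ᵥ ((∑ i, outer (prodVec (α i) (β i))) -
      (((min m n : ℝ) * ε : ℝ) : ℂ) • outer Ψ) *ᵥ prodVec a c := by
  rw [star_dotProduct_sum_outer_sub_smul_outer_mulVec, Complex.zero_le_real, sub_nonneg]
  have hprod : ∀ i, ‖inC (prodVec (α i) (β i)) (prodVec a c)‖ ^ 2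
      = ‖inC a (α i)‖ ^ 2 * ‖inC c (β i)‖ ^ 2 := fun i => by
    rw [inC_prodVec, norm_mul, mul_pow, norm_inC_comm (α i), norm_inC_comm (β i)]
  calc (min m n : ℝ) * ε * ‖inC Ψ (prodVec a c)‖ ^ 2
      = ε * ((min m n : ℝ) * ‖inC Ψ (prodVec a c)‖ ^ 2) := by ring
    _ ≤ ε * ((∑ i, ‖a i‖ ^ 2) * ∑ j, ‖c j‖ ^ 2) :=
        mul_le_mul_of_nonneg_left (hΨ.mul_norm_inC_prodVec_sq_le a c) hε
    _ ≤ ∑ i, ‖inC (prodVec (α i) (β i)) (prodVec a c)‖ ^ 2 := by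
        simp only [hprod]
        exact mul_le_sum_of_forall_inC_self_eq_one hεmin a c

theorem upb_witness_map_positive_not_cp_indecomposable_general
    (m n s : ℕ) (hm : 0 < m) (hn : 0 < n)
    (α : Fin s → Fin m → ℂ) (β : Fin s → Fin n → ℂ)
    (hUPB : IsUPB α β)
    (ρ : Matrix (Fin m × Fin n) (Fin m × Fin n) ℂ)
    (hρ : ρ = ((m * n - s : ℕ) : ℂ)⁻¹ • (1 - ∑ i, outer (prodVec (α i) (β i))))
    (ε : ℝ) (hε : 0 < ε)
    (hεmin : ∀ (a : Fin m → ℂ) (b : Fin n → ℂ), inC a a = 1 → inC b b = 1 →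
      ε ≤ ∑ i, ‖inC a (α i)‖ ^ 2 * ‖inC b (β i)‖ ^ 2)
    (Ψ : Fin m × Fin n → ℂ) (hΨ : MaxEnt Ψ)
    (hΨρ : 0 < (inC Ψ (ρ.mulVec Ψ)).re)
    (H : Matrix (Fin m × Fin n) (Fin m × Fin n) ℂ)
    (hH : H = (∑ i, outer (prodVec (α i) (β i))) -
      (((min m n : ℝ) * ε : ℝ) : ℂ) • outer Ψ)
    (S : Matrix (Fin m) (Fin m) ℂ →ₗ[ℂ] Matrix (Fin n) (Fin n) ℂ)
    (hS : ∀ i j : Fin m,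
      S (Matrix.single i j 1) = Matrix.of fun b b' => H (i, b) (j, b')) :
    (∀ M : Matrix (Fin m) (Fin m) ℂ, M.PosSemidef → (S M).PosSemidef) ∧
    ¬ IsCP S ∧
    ¬ ∃ (S₁ S₂ : Matrix (Fin m) (Fin m) ℂ →ₗ[ℂ] Matrix (Fin n) (Fin n) ℂ),
        IsCP S₁ ∧ IsCP S₂ ∧ S = S₁ + S₂ ∘ₗ Tmap (Fin m) := by
  have hON := hUPB.1
  have hc : (0 : ℂ) ≤ ((m * n - s : ℕ) : ℂ)⁻¹ := by
    rw [← Complex.ofReal_natCast, ← Complex.ofReal_inv, Complex.zero_le_real]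
    positivity
  have hρPSD : ρ.PosSemidef := hρ ▸ hON.posSemidef_one_sub_sum_outer.smul hc
  have hρPPT : (partialTranspose ρ).PosSemidef := by
    rw [hρ, map_smul]
    exact hON.posSemidef_partialTranspose_one_sub_sum_outer.smul hc
  have hneg : (trace (ρ * H)).re < 0 := by
    have hkernel : ∀ t, ρ *ᵥ prodVec (α t) (β t) = 0 := fun t => by
      rw [hρ, smul_mulVec, hON.one_sub_sum_outer_mulVec, smul_zero]
    rw [hH, trace_mul_sum_outer_sub_smul_outer hkernel, Complex.neg_re, Complex.re_ofReal_mul,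
      neg_neg_iff_pos]
    exact mul_pos (by positivity) hΨρ
  have hindec : ¬ ∃ (S₁ S₂ : Matrix (Fin m) (Fin m) ℂ →ₗ[ℂ] Matrix (Fin n) (Fin n) ℂ),
      IsCP S₁ ∧ IsCP S₂ ∧ S = S₁ + S₂ ∘ₗ Tmap (Fin m) := by
    rintro ⟨S₁, S₂, h₁, h₂, rfl⟩
    have hnonneg := trace_mul_nonneg_of_decomposable h₁ h₂ hS hρPSD hρPPT
    exact hneg.not_ge (Complex.nonneg_iff.mp hnonneg).1
  refine ⟨fun M hM => ?_, fun hCP => hindec ⟨S, 0, hCP, isCP_zero, by simp⟩, hindec⟩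
  exact posSemidef_apply_of_single hS (hH ▸ isHermitian_sum_outer_sub_smul_outer _ _ _)
    (hH ▸ star_prodVec_dotProduct_upbWitness_mulVec_nonneg hε.le hεmin hΨ) hM

/-- the map `S(|i⟩⟨j|) = ⟨i|H|j⟩` built from the UPB witness `H` is
positive, not completely positive, and indecomposable. -/
theorem upb_witness_map_positive_not_cp_indecomposable
    (m n s : ℕ) (hm : 0 < m) (hn : 0 < n)
    (α : Fin s → Fin m → ℂ) (β : Fin s → Fin n → ℂ)
    (hUPB : IsUPB α β) (hs : s < m * n)
    (ρ : Matrix (Fin m × Fin n) (Fin m × Fin n) ℂ)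
    (hρ : ρ = ((m * n - s : ℕ) : ℂ)⁻¹ • (1 - ∑ i, outer (prodVec (α i) (β i))))
    (ε : ℝ) (hε : 0 < ε)
    (hεmin : ∀ (a : Fin m → ℂ) (b : Fin n → ℂ), inC a a = 1 → inC b b = 1 →
      ε ≤ ∑ i, ‖inC a (α i)‖ ^ 2 * ‖inC b (β i)‖ ^ 2)
    (hεatt : ∃ (a : Fin m → ℂ) (b : Fin n → ℂ), inC a a = 1 ∧ inC b b = 1 ∧
      ε = ∑ i, ‖inC a (α i)‖ ^ 2 * ‖inC b (β i)‖ ^ 2)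
    (Ψ : Fin m × Fin n → ℂ) (hΨ : MaxEnt Ψ)
    (hΨρ : 0 < (inC Ψ (ρ.mulVec Ψ)).re)
    (H : Matrix (Fin m × Fin n) (Fin m × Fin n) ℂ)
    (hH : H = (∑ i, outer (prodVec (α i) (β i))) -
      (((min m n : ℝ) * ε : ℝ) : ℂ) • outer Ψ)
    (S : Matrix (Fin m) (Fin m) ℂ →ₗ[ℂ] Matrix (Fin n) (Fin n) ℂ)
    (hS : ∀ i j : Fin m,
      S (Matrix.single i j 1) = Matrix.of fun b b' => H (i, b) (j, b')) :
    (∀ M : Matrix (Fin m) (Fin m) ℂ, M.PosSemidef → (S M).PosSemidef) ∧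
    ¬ IsCP S ∧
    ¬ ∃ (S₁ S₂ : Matrix (Fin m) (Fin m) ℂ →ₗ[ℂ] Matrix (Fin n) (Fin n) ℂ),
        IsCP S₁ ∧ IsCP S₂ ∧ S = S₁ + S₂ ∘ₗ Tmap (Fin m) :=
  upb_witness_map_positive_not_cp_indecomposable_general m n s hm hn α β hUPB ρ hρ ε hε hεmin Ψ hΨ
    hΨρ H hH S hS
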